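/- Let G be a finite connected graph with nontrivial automorphism group. If fix(G) = F_xt(G), then no class of any fixatic partition of V(G) is a singleton. -/

import Mathlib

open SimpleGraph

def IsFixingSet {V : Type*} (G : SimpleGraph V) (F : Set V) : Prop :=
  ∀ φ : G ≃g G, (∀ v ∈ F, φ v = v) → ∀ v, φ v = v

noncomputable def fixingNumber {V : Type*} (G : SimpleGraph V) [Fintype V] : ℕ :=
  sInf {n | ∃ F : Finset V, F.card = n ∧ IsFixingSet G ↑F}

def IsFixaticPartition {V : Type*} [Fintype V] [DecidableEq V] (G : SimpleGraph V)
    (P : Finpartition (Finset.univ : Finset V)) : Prop :=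
  ∀ F ∈ P.parts, IsFixingSet G ↑F

noncomputable def fixaticNumber {V : Type*} (G : SimpleGraph V) [Fintype V] [DecidableEq V] : ℕ :=
  sSup {k | ∃ P : Finpartition (Finset.univ : Finset V), IsFixaticPartition G P ∧ P.parts.card = k}

open Finset

/-! A singleton class of a fixatic partition gives `F_xt(G) = fix(G) ≤ 1`, so that partition has
a single class, which is then all of `V(G)`. Hence `G` has one vertex and no nontrivial
automorphism. -/

theorem Finpartition.eq_of_card_parts_le_one {α : Type*} [DecidableEq α] {s t : Finset α}
    (P : Finpartition s) (hP : #P.parts ≤ 1) (ht : t ∈ P.parts) : t = s := by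
  have hparts : P.parts = {t} :=
    eq_singleton_iff_unique_mem.2 ⟨ht, fun u hu => card_le_one.1 hP u hu t ht⟩
  simpa [hparts] using P.sup_parts

section

variable {V : Type*} [Fintype V] (G : SimpleGraph V)

theorem fixingNumber_le_card {F : Finset V} (hF : IsFixingSet G ↑F) : fixingNumber G ≤ #F :=
  Nat.sInf_le ⟨F, rfl, hF⟩

theorem card_parts_le_fixaticNumber [DecidableEq V] {P : Finpartition (univ : Finset V)}
    (hP : IsFixaticPartition G P) : #P.parts ≤ fixaticNumber G := by
  refine le_csSup ⟨Fintype.card V, ?_⟩ ⟨P, hP, rfl⟩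
  rintro k ⟨Q, -, rfl⟩
  simpa using Q.card_parts_le_card

end

theorem stmt16_general {V : Type*} [Fintype V] [DecidableEq V] (G : SimpleGraph V)
    (hsym : ∃ φ : G ≃g G, ∃ v, φ v ≠ v)
    (h : fixingNumber G = fixaticNumber G) :
    ∀ P : Finpartition (Finset.univ : Finset V), IsFixaticPartition G P →
      ∀ F ∈ P.parts, F.card ≠ 1 := by
  intro P hP F hF hcard
  have hfix : fixingNumber G ≤ 1 := hcard ▸ fixingNumber_le_card G (hP F hF)
  have hparts : #P.parts ≤ 1 := ((card_parts_le_fixaticNumber G hP).trans h.ge).trans hfix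
  have hV : Fintype.card V = 1 := by
    rw [← card_univ, ← P.eq_of_card_parts_le_one hparts hF, hcard]
  obtain ⟨φ, v, hv⟩ := hsym
  exact hv (Fintype.card_le_one_iff_subsingleton.1 hV.le |>.elim _ _)

theorem stmt16 {V : Type*} [Fintype V] [DecidableEq V] (G : SimpleGraph V)
    (hG : G.Connected) (hsym : ∃ φ : G ≃g G, ∃ v, φ v ≠ v)
    (h : fixingNumber G = fixaticNumber G) :
    ∀ P : Finpartition (Finset.univ : Finset V), IsFixaticPartition G P →
      ∀ F ∈ P.parts, F.card ≠ 1 :=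
  stmt16_general G hsym h
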